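/- arXiv:1912.09762 — 2 statements merged into one kernel-verified Lean document; each statement's English description precedes it below -/
import Mathlib

section
/- With A₀ as above and z in the resolvent set of B, the operator R defined by (Rφ)(θ) = e^{zθ}·R(z,B)φ(0) + ∫_θ^0 e^{z(θ-s)} φ(s) ds (θ ∈ [-h,0]) maps X into D(A₀) and satisfies (z - A₀)(Rφ) = φ for all φ ∈ X; hence z belongs to the resolvent set of A₀ and R = R(z, A₀). -/
/-!
Factoring out `e^{zθ}` gives `(Rφ)(θ) = e^{zθ} (R(z,B) φ(0) + ∫_θ^0 e^{-zs} φ(s) ds)`, so the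
fundamental theorem of calculus yields `(Rφ)' = z Rφ - φ`, which is continuous. At `θ = 0` the
integral vanishes, so `(Rφ)(0) = R(z,B) φ(0) ∈ D(B)` and
`(Rφ)'(0) = z R(z,B) φ(0) - φ(0) = B R(z,B) φ(0)`.
-/

open intervalIntegral

theorem hasDerivAt_cexp_mul_ofReal (z : ℂ) (θ : ℝ) :
    HasDerivAt (fun u : ℝ => Complex.exp (z * u)) (z * Complex.exp (z * θ)) θ := by
  simpa [mul_comm] using (((hasDerivAt_id (θ : ℂ)).const_mul z).cexp).comp_ofReal

theorem hasDerivWithinAt_integral_left_Icc {E : Type*} [NormedAddCommGroup E] [NormedSpace ℝ E]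
    [CompleteSpace E] {f : ℝ → E} {a b θ : ℝ} (hf : ContinuousOn f (Set.Icc a b))
    (hθ : θ ∈ Set.Icc a b) :
    HasDerivWithinAt (fun u => ∫ x in u..b, f x) (-f θ) (Set.Icc a b) θ := by
  have : Fact (θ ∈ Set.Icc a b) := ⟨hθ⟩
  have hsub : Set.uIcc θ b ⊆ Set.Icc a b := Set.uIcc_subset_Icc hθ ⟨hθ.1.trans hθ.2, le_rfl⟩
  exact integral_hasDerivWithinAt_left ((hf.mono hsub).intervalIntegrable)
    ⟨_, self_mem_nhdsWithin, hf.aestronglyMeasurable measurableSet_Icc⟩ (hf θ hθ)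

section DelayResolvent

variable {Y : Type*} [NormedAddCommGroup Y] [NormedSpace ℂ Y]

/-- With `y = R(z,B) φ(0)` this is the function `Rφ` of the statement. -/
noncomputable def delayResolvent (z : ℂ) (y : Y) (φ : ℝ → Y) (θ : ℝ) : Y :=
  Complex.exp (z * θ) • y + ∫ s in θ..0, Complex.exp (z * (θ - s)) • φ s

theorem delayResolvent_zero (z : ℂ) (y : Y) (φ : ℝ → Y) : delayResolvent z y φ 0 = y := by
  simp [delayResolvent]

theorem delayResolvent_eq_exp_smul (z : ℂ) (y : Y) (φ : ℝ → Y) (θ : ℝ) :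
    delayResolvent z y φ θ =
      Complex.exp (z * θ) • (y + ∫ s in θ..0, Complex.exp (-(z * s)) • φ s) := by
  have hexp : ∀ s : ℝ, Complex.exp (z * (θ - s)) • φ s
      = Complex.exp (z * θ) • Complex.exp (-(z * s)) • φ s := by
    intro s
    rw [smul_smul, ← Complex.exp_add]
    ring_nf
  simp only [delayResolvent, hexp, intervalIntegral.integral_smul, smul_add]

section Derivative

variable [CompleteSpace Y] (z : ℂ) (y : Y) {φ : ℝ → Y} {a : ℝ}

theorem hasDerivWithinAt_delayResolvent (hφ : ContinuousOn φ (Set.Icc a 0)) {θ : ℝ}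
    (hθ : θ ∈ Set.Icc a 0) :
    HasDerivWithinAt (delayResolvent z y φ) (z • delayResolvent z y φ θ - φ θ)
      (Set.Icc a 0) θ := by
  have hweighted : ContinuousOn (fun s : ℝ => Complex.exp (-(z * s)) • φ s) (Set.Icc a 0) := by
    fun_prop
  have hproduct := ((hasDerivAt_cexp_mul_ofReal z θ).hasDerivWithinAt).smul
    ((hasDerivWithinAt_integral_left_Icc hweighted hθ).const_add y)
  convert hproduct using 1
  · exact funext (delayResolvent_eq_exp_smul z y φ)
  · rw [delayResolvent_eq_exp_smul, smul_neg, smul_smul, smul_smul, ← Complex.exp_add,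
      add_neg_cancel, Complex.exp_zero, one_smul]
    abel

theorem derivWithin_delayResolvent (hφ : ContinuousOn φ (Set.Icc a 0)) (ha : a < 0) {θ : ℝ}
    (hθ : θ ∈ Set.Icc a 0) :
    derivWithin (delayResolvent z y φ) (Set.Icc a 0) θ = z • delayResolvent z y φ θ - φ θ :=
  (hasDerivWithinAt_delayResolvent z y hφ hθ).derivWithin (uniqueDiffOn_Icc ha θ hθ)

theorem contDiffOn_delayResolvent (hφ : ContinuousOn φ (Set.Icc a 0)) (ha : a < 0) :
    ContDiffOn ℝ 1 (delayResolvent z y φ) (Set.Icc a 0) := by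
  have hdiff : DifferentiableOn ℝ (delayResolvent z y φ) (Set.Icc a 0) :=
    fun θ hθ => (hasDerivWithinAt_delayResolvent z y hφ hθ).differentiableWithinAt
  exact (contDiffOn_one_iff_derivWithin (uniqueDiffOn_Icc ha)).2
    ⟨hdiff, ((hdiff.continuousOn.const_smul z).sub hφ).congr
      fun θ hθ => derivWithin_delayResolvent z y hφ ha hθ⟩

end Derivative

end DelayResolvent

theorem stmt14_general {Y : Type*} [NormedAddCommGroup Y] [NormedSpace ℂ Y] [CompleteSpace Y]
    (h : ℝ) (hh : 0 < h) (DB : Set Y) (B : Y → Y) (z : ℂ) (Rz : Y → Y)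
    (hRz1 : ∀ y, Rz y ∈ DB ∧ z • Rz y - B (Rz y) = y)
    (φ : ℝ → Y) (hφ : ContinuousOn φ (Set.Icc (-h) 0)) :
    let Rφ : ℝ → Y := fun θ => Complex.exp (z * (θ : ℂ)) • Rz (φ 0)
      + ∫ s in θ..(0:ℝ), Complex.exp (z * ((θ : ℂ) - (s : ℂ))) • φ s
    ContDiffOn ℝ 1 Rφ (Set.Icc (-h) 0) ∧ Rφ 0 ∈ DB ∧
      derivWithin Rφ (Set.Icc (-h) 0) 0 = B (Rφ 0) ∧
      ∀ θ ∈ Set.Icc (-h) 0, z • Rφ θ - derivWithin Rφ (Set.Icc (-h) 0) θ = φ θ := by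
  intro Rφ
  have hRφ : Rφ = delayResolvent z (Rz (φ 0)) φ := rfl
  clear_value Rφ
  subst hRφ
  have ha : -h < 0 := neg_lt_zero.2 hh
  have hderiv := fun θ => derivWithin_delayResolvent z (Rz (φ 0)) hφ ha (θ := θ)
  obtain ⟨hmem, hresolvent⟩ := hRz1 (φ 0)
  refine ⟨contDiffOn_delayResolvent z _ hφ ha, ?_, ?_, fun θ hθ => ?_⟩
  · rwa [delayResolvent_zero]
  · rw [hderiv 0 ⟨ha.le, le_rfl⟩, delayResolvent_zero]
    exact sub_eq_of_eq_add (eq_add_of_sub_eq' hresolvent)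
  · rw [hderiv θ hθ]
    abel

/-- If z is in the resolvent set of B (with resolvent Rz), then the operator
(Rφ)(θ) = e^{zθ} Rz(φ(0)) + ∫_θ^0 e^{z(θ-s)} φ(s) ds maps continuous φ into the
domain of A₀ and satisfies (z - A₀)(Rφ) = φ; hence it is the resolvent of A₀. -/
theorem stmt14 {Y : Type*} [NormedAddCommGroup Y] [NormedSpace ℂ Y] [CompleteSpace Y]
    (h : ℝ) (hh : 0 < h) (DB : Set Y) (B : Y → Y) (z : ℂ) (Rz : Y → Y)
    (hRz1 : ∀ y, Rz y ∈ DB ∧ z • Rz y - B (Rz y) = y)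
    (hRz2 : ∀ q ∈ DB, Rz (z • q - B q) = q)
    (φ : ℝ → Y) (hφ : ContinuousOn φ (Set.Icc (-h) 0)) :
    let Rφ : ℝ → Y := fun θ => Complex.exp (z * (θ : ℂ)) • Rz (φ 0)
      + ∫ s in θ..(0:ℝ), Complex.exp (z * ((θ : ℂ) - (s : ℂ))) • φ s
    ContDiffOn ℝ 1 Rφ (Set.Icc (-h) 0) ∧ Rφ 0 ∈ DB ∧
      derivWithin Rφ (Set.Icc (-h) 0) 0 = B (Rφ 0) ∧
      ∀ θ ∈ Set.Icc (-h) 0, z • Rφ θ - derivWithin Rφ (Set.Icc (-h) 0) θ = φ θ :=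
  stmt14_general h hh DB B z Rz hRz1 φ hφ
end

section
/- Let z ∈ ρ(A₀) (the resolvent set of the generator A₀ of the shift semigroup on X = C([-h,0];Y)). Then z ∈ ρ(B). (Combined with the converse, σ(A₀) = σ(B).) -/
/-!
Surjectivity: applying the inverse of `z - A₀` to the constant function `y` gives `φ` with
`z φ(0) - B φ(0) = z φ(0) - φ'(0) = y`. Injectivity: an eigenvector `q` of `B` for `z` yields the
eigenfunction `θ ↦ e^{zθ} q` of `A₀`, which must vanish, so `q = 0`.
-/

open Set

section ExpSmul

variable {E : Type*} [NormedAddCommGroup E] [NormedSpace ℂ E]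

theorem hasDerivAt_cexp_mul_smul (z : ℂ) (q : E) (t : ℝ) :
    HasDerivAt (fun s : ℝ => Complex.exp (z * s) • q) (z • Complex.exp (z * t) • q) t := by
  have hlin : HasDerivAt (fun s : ℝ => z * (s : ℂ)) z t := by
    simpa using ((hasDerivAt_id t).ofReal_comp).const_mul z
  simpa [smul_smul, mul_comm] using hlin.cexp.smul_const q

theorem contDiff_cexp_mul_smul (z : ℂ) (q : E) {n : WithTop ℕ∞} :
    ContDiff ℝ n (fun s : ℝ => Complex.exp (z * s) • q) := by
  have hlin : ContDiff ℝ n (fun s : ℝ => z * (s : ℂ)) :=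
    contDiff_const.mul Complex.ofRealCLM.contDiff
  exact (Complex.contDiff_exp.comp hlin).smul contDiff_const

theorem derivWithin_cexp_mul_smul (z : ℂ) (q : E) {s : Set ℝ} {t : ℝ}
    (hst : UniqueDiffWithinAt ℝ s t) :
    derivWithin (fun s : ℝ => Complex.exp (z * s) • q) s t = z • Complex.exp (z * t) • q :=
  (hasDerivAt_cexp_mul_smul z q t).hasDerivWithinAt.derivWithin hst

end ExpSmul

theorem stmt15_general {Y : Type*} [NormedAddCommGroup Y] [NormedSpace ℂ Y]
    (h : ℝ) (hh : 0 < h) (DB : Set Y) (B : Y → Y) (z : ℂ)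
    (hsurj : ∀ ψ : ℝ → Y, ContinuousOn ψ (Set.Icc (-h) 0) →
      ∃ φ : ℝ → Y, ContDiffOn ℝ 1 φ (Set.Icc (-h) 0) ∧ φ 0 ∈ DB ∧
        derivWithin φ (Set.Icc (-h) 0) 0 = B (φ 0) ∧
        ∀ θ ∈ Set.Icc (-h) 0, z • φ θ - derivWithin φ (Set.Icc (-h) 0) θ = ψ θ)
    (hinj : ∀ φ : ℝ → Y, ContDiffOn ℝ 1 φ (Set.Icc (-h) 0) → φ 0 ∈ DB →
      derivWithin φ (Set.Icc (-h) 0) 0 = B (φ 0) →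
      (∀ θ ∈ Set.Icc (-h) 0, z • φ θ - derivWithin φ (Set.Icc (-h) 0) θ = 0) →
      ∀ θ ∈ Set.Icc (-h) 0, φ θ = 0) :
    (∀ y : Y, ∃ q ∈ DB, z • q - B q = y) ∧
      (∀ q ∈ DB, z • q - B q = 0 → q = 0) := by
  have h0 : (0 : ℝ) ∈ Icc (-h) 0 := ⟨by linarith, le_rfl⟩
  have hIcc : UniqueDiffOn ℝ (Icc (-h) 0) := uniqueDiffOn_Icc (by linarith)
  refine ⟨fun y => ?_, fun q hq hzq => ?_⟩
  · obtain ⟨φ, -, hφ0, hφ', hφ⟩ := hsurj (fun _ => y) continuousOn_const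
    exact ⟨φ 0, hφ0, hφ' ▸ hφ 0 h0⟩
  · have hBq : B q = z • q := (sub_eq_zero.mp hzq).symm
    have hφ0 : Complex.exp (z * (0 : ℝ)) • q = q := by simp
    have heig : ∀ θ ∈ Icc (-h) 0, z • Complex.exp (z * θ) • q -
        derivWithin (fun s : ℝ => Complex.exp (z * s) • q) (Icc (-h) 0) θ = 0 := fun θ hθ => by
      rw [derivWithin_cexp_mul_smul z q (hIcc θ hθ), sub_self]
    have hder0 := derivWithin_cexp_mul_smul z q (hIcc 0 h0)
    rw [hφ0] at hder0
    have hφ_eq_zero := hinj _ (contDiff_cexp_mul_smul z q).contDiffOn (by rwa [hφ0])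
      (by rw [hder0, hφ0, hBq]) heig 0 h0
    rwa [hφ0] at hφ_eq_zero

/-- If z - A₀ is bijective from D(A₀) onto C([-h,0];Y) (surjectivity and injectivity
stated concretely), then z - B is bijective from D(B) onto Y, i.e. z ∈ ρ(B). -/
theorem stmt15 {Y : Type*} [NormedAddCommGroup Y] [NormedSpace ℂ Y] [CompleteSpace Y]
    (h : ℝ) (hh : 0 < h) (DB : Set Y) (B : Y → Y) (z : ℂ)
    (hsurj : ∀ ψ : ℝ → Y, ContinuousOn ψ (Set.Icc (-h) 0) →
      ∃ φ : ℝ → Y, ContDiffOn ℝ 1 φ (Set.Icc (-h) 0) ∧ φ 0 ∈ DB ∧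
        derivWithin φ (Set.Icc (-h) 0) 0 = B (φ 0) ∧
        ∀ θ ∈ Set.Icc (-h) 0, z • φ θ - derivWithin φ (Set.Icc (-h) 0) θ = ψ θ)
    (hinj : ∀ φ : ℝ → Y, ContDiffOn ℝ 1 φ (Set.Icc (-h) 0) → φ 0 ∈ DB →
      derivWithin φ (Set.Icc (-h) 0) 0 = B (φ 0) →
      (∀ θ ∈ Set.Icc (-h) 0, z • φ θ - derivWithin φ (Set.Icc (-h) 0) θ = 0) →
      ∀ θ ∈ Set.Icc (-h) 0, φ θ = 0) :
    (∀ y : Y, ∃ q ∈ DB, z • q - B q = y) ∧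
      (∀ q ∈ DB, z • q - B q = 0 → q = 0) :=
  stmt15_general h hh DB B z hsurj hinj
end
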